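/- arXiv:1204.3175 — 3 statements merged into one kernel-verified Lean document; each statement's English description precedes it below -/
import Mathlib

section
/- Let x_1 ≤ ... ≤ x_n be positive integers with reciprocal sum 1, and let 1 ≤ r ≤ n-1. Then x_{r+1} ≤ (n - r) · x_1 · x_2 · ... · x_r. -/
/-- If `x_1 ≤ … ≤ x_n` are positive integers with `∑ 1/x_i = 1` and `1 ≤ r ≤ n-1`,
then `x_{r+1} ≤ (n - r) · x_1 ⋯ x_r`.  (Indices: `x_i = x ⟨i-1⟩`.) -/
theorem stmt_2 (n : ℕ) (x : Fin n → ℕ)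
    (hpos : ∀ i, 0 < x i) (hmono : Monotone x)
    (hsum : ∑ i, (1 : ℚ) / (x i : ℚ) = 1)
    (r : ℕ) (hr : 1 ≤ r) (hrn : r ≤ n - 1) (hn : 1 ≤ n) :
    x ⟨r, by omega⟩ ≤ (n - r) * ∏ i : Fin r, x (Fin.castLE (by omega) i) := by
  have hrn' : r < n := by omega
  set P : ℕ := ∏ i : Fin r, x (Fin.castLE (by omega : r ≤ n) i) with hPdef
  have hPpos : 0 < P := Finset.prod_pos (fun i _ => hpos _)
  set s : Finset (Fin n) := Finset.univ.filter (fun i => (i : ℕ) < r) with hs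
  set ir : Fin n := ⟨r, hrn'⟩ with hir
  have hirmem : ir ∈ sᶜ := by simp [hs, hir]
  -- compl card
  have hscard : s.card = r := by
    have : s = Finset.Iio ir := by
      ext i; simp [hs, hir, Fin.lt_def]
    rw [this]
    simp [hir]
  have hccard : sᶜ.card = n - r := by
    have := Finset.card_compl s
    simp [hscard] at this
    omega
  have hxpos : ∀ i : Fin n, (0:ℚ) < (x i : ℚ) := fun i => by
    exact_mod_cast hpos i
  set A : ℚ := ∑ i ∈ s, (1:ℚ) / (x i : ℚ) with hA
  set B : ℚ := ∑ i ∈ sᶜ, (1:ℚ) / (x i : ℚ) with hB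
  have hAB : A + B = 1 := by rw [hA, hB, Finset.sum_add_sum_compl]; exact hsum
  have hBpos : 0 < B := by
    apply Finset.sum_pos'
    · intro i _; positivity
    · exact ⟨ir, hirmem, by have := hxpos ir; positivity⟩
  -- B ≤ card/x ir
  have hBle : B ≤ (sᶜ.card : ℚ) * (1 / (x ir : ℚ)) := by
    have := Finset.sum_le_card_nsmul sᶜ (fun i => (1:ℚ) / (x i : ℚ)) (1 / (x ir : ℚ))
      (fun i hi => by
        apply one_div_le_one_div_of_le (hxpos ir)
        have : (ir : ℕ) ≤ (i : ℕ) := by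
          simp [hs] at hi
          simpa [hir] using hi
        exact_mod_cast hmono (by exact this))
    rw [hB]
    simpa [nsmul_eq_mul, one_div] using this
  -- integrality
  have hdvd : ∀ i ∈ s, x i ∣ P := by
    intro i hi
    have hi' : (i : ℕ) < r := by simpa [hs] using hi
    have : x (Fin.castLE (by omega : r ≤ n) ⟨(i:ℕ), hi'⟩) ∣ P :=
      Finset.dvd_prod_of_mem _ (Finset.mem_univ _)
    exact this
  set m : ℕ := ∑ i ∈ s, P / x i with hm
  have hmQ : (m : ℚ) = (P : ℚ) * A := by
    rw [hm, hA, Finset.mul_sum, Nat.cast_sum]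
    apply Finset.sum_congr rfl
    intro i hi
    rw [Nat.cast_div (hdvd i hi) (by exact_mod_cast (hpos i).ne')]
    ring
  have hA1 : A < 1 := by linarith
  have hmP : m < P := by
    have : (m : ℚ) < (P : ℚ) := by
      rw [hmQ]
      calc (P:ℚ) * A < (P:ℚ) * 1 := by
            apply mul_lt_mul_of_pos_left hA1
            exact_mod_cast hPpos
        _ = P := by ring
    exact_mod_cast this
  have h1le : (1 : ℚ) ≤ (P : ℚ) * B := by
    have : (P : ℚ) * B = (P : ℚ) - m := by
      rw [hmQ]; have := hAB; nlinarith
    rw [this]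
    have : (m:ℚ) + 1 ≤ (P:ℚ) := by exact_mod_cast hmP
    linarith
  have hfin : (x ir : ℚ) ≤ (sᶜ.card : ℚ) * (P : ℚ) := by
    have hx := hxpos ir
    have h2 : (P : ℚ) * B ≤ (P:ℚ) * ((sᶜ.card : ℚ) * (1 / (x ir : ℚ))) := by
      apply mul_le_mul_of_nonneg_left hBle (by positivity)
    have h3 : (1:ℚ) ≤ (P:ℚ) * ((sᶜ.card : ℚ) * (1 / (x ir : ℚ))) := le_trans h1le h2
    rw [div_eq_mul_inv] at h3
    have h4 := mul_le_mul_of_nonneg_left h3 (le_of_lt hx)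
    field_simp at h4
    linarith
  have : x ir ≤ sᶜ.card * P := by exact_mod_cast hfin
  rw [hccard] at this
  exact this
end

section
/- Let G be a finitely generated residually finite group and φ an automorphism of G. If the fixed-point subgroup C_G(φ) = {g : φ(g) = g} is infinite, then φ has infinitely many twisted conjugacy classes (R(φ) = ∞). -/
/-!
Suppose `R(φ) = n < ∞`. Residual finiteness separates any `m` fixed points of `φ` in a finite
quotient, and since `G` is finitely generated this quotient can be taken to be `G ⧸ K` with `K`
characteristic, so that `φ` descends to an automorphism `ψ` of the finite group `Q = G ⧸ K` with
`R(ψ) ≤ n` and `|C_Q(ψ)| ≥ m`. Now `C_Q(ψ)` is the stabilizer of `1` for the twisted conjugation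
action of `Q` on itself, and the class equation writes `1` as a sum of `R(ψ)` unit fractions
`1 / |Stab|`. As in Landau's theorem, such a sum has all its denominators bounded in terms of
its length, so `m` is bounded in terms of `n`: a contradiction for `m` large.
-/

/-- A group is residually finite if every nontrivial element survives in some
finite quotient (equivalently, avoids some finite-index normal subgroup). -/
def IsResiduallyFinite (G : Type*) [Group G] : Prop :=
  ∀ g : G, g ≠ 1 → ∃ H : Subgroup G, H.Normal ∧ H.FiniteIndex ∧ g ∉ H

/-- The setoid of `φ`-twisted conjugacy: `g ~ h` iff `h = x * g * φ(x)⁻¹` for some `x`. -/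
def twistedConjSetoid {G : Type*} [Group G] (φ : G ≃* G) : Setoid G where
  r g h := ∃ x : G, h = x * g * (φ x)⁻¹
  iseqv := by
    refine ⟨fun g => ⟨1, by simp⟩, ?_, ?_⟩
    · rintro g h ⟨x, rfl⟩
      exact ⟨x⁻¹, by simp [mul_assoc]⟩
    · rintro a b c ⟨x, rfl⟩ ⟨y, rfl⟩
      exact ⟨y * x, by simp [map_mul, mul_assoc]⟩

/-- If at most `r` unit fractions sum to `q` with `q.den ≤ b`, the largest one is at least
`q / r ≥ 1 / (r * b)`; removing it leaves at most `r - 1` unit fractions summing to a rational of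
denominator at most `r * b ^ 2`. -/
def landauBound : ℕ → ℕ → ℕ
  | 0, _ => 0
  | r + 1, b => max ((r + 1) * b) (landauBound r ((r + 1) * b * b))

theorem one_le_mul_den_of_pos {q : ℚ} (hq : 0 < q) : 1 ≤ q * q.den := by
  rw [Rat.mul_den_eq_num]
  exact_mod_cast Rat.num_pos.mpr hq

theorem le_landauBound_of_sum_inv_eq {ι : Type*} {r b : ℕ} {q : ℚ} {t : Finset ι} {f : ι → ℕ}
    (hq : 0 < q) (hb : q.den ≤ b) (ht : t.card ≤ r) (hf : ∀ i ∈ t, 0 < f i)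
    (hsum : ∑ i ∈ t, ((f i : ℚ))⁻¹ = q) {i : ι} (hi : i ∈ t) : f i ≤ landauBound r b := by
  classical
  induction r generalizing b q t i with
  | zero => simp [Finset.card_eq_zero.mp (Nat.le_zero.mp ht)] at hi
  | succ r ih =>
    obtain ⟨y, hy, hy_min⟩ := Finset.exists_min_image t f ⟨i, hi⟩
    have hy_le : f y ≤ (r + 1) * b := by
      have hq_fy : q * f y ≤ r + 1 := calc
        q * f y = ∑ j ∈ t, (f y : ℚ) / f j := by
          rw [← hsum, Finset.sum_mul]
          simp only [div_eq_inv_mul]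
        _ ≤ ∑ _j ∈ t, (1 : ℚ) := Finset.sum_le_sum fun j hj =>
          (div_le_one (by exact_mod_cast hf j hj)).mpr (by exact_mod_cast hy_min j hj)
        _ ≤ r + 1 := by
          rw [Finset.sum_const, nsmul_one]
          exact_mod_cast ht
      have hqb : 1 ≤ q * b := (one_le_mul_den_of_pos hq).trans
        (mul_le_mul_of_nonneg_left (by exact_mod_cast hb) hq.le)
      have hfy : (0 : ℚ) ≤ f y := Nat.cast_nonneg _
      exact_mod_cast (by nlinarith : (f y : ℚ) ≤ (r + 1) * b)
    rcases eq_or_ne i y with rfl | hiy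
    · exact hy_le.trans (le_max_left _ _)
    have hi' : i ∈ t.erase y := Finset.mem_erase.mpr ⟨hiy, hi⟩
    have hsum' : ∑ j ∈ t.erase y, ((f j : ℚ))⁻¹ = q - (f y : ℚ)⁻¹ := by
      rw [Finset.sum_erase_eq_sub hy, hsum]
    have hq' : 0 < q - (f y : ℚ)⁻¹ := hsum' ▸ Finset.sum_pos
      (fun j hj => inv_pos.mpr (by exact_mod_cast hf j (Finset.mem_of_mem_erase hj))) ⟨i, hi'⟩
    have hb' : (q - (f y : ℚ)⁻¹).den ≤ (r + 1) * b * b := by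
      have hdvd := Rat.sub_den_dvd q (f y : ℚ)⁻¹
      rw [Rat.inv_natCast_den_of_pos (hf y hy)] at hdvd
      calc (q - (f y : ℚ)⁻¹).den ≤ q.den * f y :=
            Nat.le_of_dvd (Nat.mul_pos q.den_pos (hf y hy)) hdvd
        _ ≤ b * ((r + 1) * b) := Nat.mul_le_mul hb hy_le
        _ = (r + 1) * b * b := by ring
    have ht' : (t.erase y).card ≤ r := by rw [Finset.card_erase_of_mem hy]; omega
    exact (ih hq' hb' ht' (fun j hj => hf j (Finset.mem_of_mem_erase hj)) hsum' hi').trans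
      (le_max_right _ _)

open MulAction in
theorem MulAction.card_stabilizer_le_landauBound {Q X : Type*} [Group Q] [Finite Q]
    [MulAction Q X] (hX : Nat.card X = Nat.card Q) {r : ℕ}
    (hr : Nat.card (orbitRel.Quotient Q X) ≤ r) (x : X) :
    Nat.card (stabilizer Q x) ≤ landauBound r 1 := by
  classical
  have : Finite X := Nat.finite_of_card_ne_zero (hX ▸ Nat.card_pos.ne')
  let : Fintype (orbitRel.Quotient Q X) := Fintype.ofFinite _
  have hinv (y : X) : ((Nat.card (stabilizer Q y) : ℚ))⁻¹ = (stabilizer Q y).index / Nat.card Q := by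
    have : (Nat.card (stabilizer Q y) : ℚ) ≠ 0 := by exact_mod_cast Nat.card_pos.ne'
    have : ((stabilizer Q y).index : ℚ) ≠ 0 := by exact_mod_cast Subgroup.index_ne_zero_of_finite
    rw [← (stabilizer Q y).card_mul_index]
    push_cast
    field_simp
  have hsum : ∑ ω : orbitRel.Quotient Q X, ((Nat.card (stabilizer Q ω.out) : ℚ))⁻¹ = 1 := by
    have hclass := Nat.card_congr (selfEquivSigmaOrbitsQuotientStabilizer Q X)
    rw [Nat.card_sigma, hX] at hclass
    simp only [hinv, ← Finset.sum_div]
    rw [div_eq_one_iff_eq (by exact_mod_cast Nat.card_pos.ne')]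
    exact_mod_cast hclass.symm
  have hx := Quotient.mk_out (s := orbitRel Q X) x
  rw [Nat.card_congr (stabilizerEquivStabilizerOfOrbitRel hx).toEquiv.symm]
  exact le_landauBound_of_sum_inv_eq one_pos le_rfl ((Finset.card_univ).trans_le
    (Nat.card_eq_fintype_card (α := orbitRel.Quotient Q X) ▸ hr)) (fun _ _ => Nat.card_pos) hsum
    (Finset.mem_univ _)

theorem IsResiduallyFinite.residuallyFinite {G : Type*} [Group G] (h : IsResiduallyFinite G) :
    Group.ResiduallyFinite G :=
  Group.residuallyFinite_iff_exists_finiteIndex.mpr fun g hg =>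
    (h g hg).imp fun _ hH => ⟨hH.2.1, hH.2.2⟩

theorem Group.ResiduallyFinite.exists_normal_finiteIndex_injective_mk {G : Type*} [Group G]
    [Group.ResiduallyFinite G] {ι : Type*} [Finite ι] {u : ι → G} (hu : Function.Injective u) :
    ∃ N : Subgroup G, N.Normal ∧ N.FiniteIndex ∧ Function.Injective fun i => (u i : G ⧸ N) := by
  choose H hH using fun p : {p : ι × ι // p.1 ≠ p.2} =>
    exists_finiteIndexNormalSubgroup_of_residuallyFinite _ _ (hu.ne p.2)
  refine ⟨⨅ p, (H p).toSubgroup, Subgroup.normal_iInf_normal fun p => inferInstance,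
    Subgroup.finiteIndex_iInf fun p => inferInstance, fun i j hij => ?_⟩
  by_contra hne
  refine hH ⟨(i, j), hne⟩ (QuotientGroup.eq.mpr ?_)
  exact Subgroup.mem_iInf.mp (QuotientGroup.eq.mp hij) _

theorem finite_monoidHom_of_fg (M N : Type*) [Monoid M] [Monoid.FG M] [Monoid N] [Finite N] :
    Finite (M →* N) := by
  obtain ⟨S, hS⟩ := Monoid.fg_def.mp ‹_›
  refine Finite.of_injective (fun f (s : S) => f s) fun f g hfg => ?_
  exact MonoidHom.eq_of_eqOn_denseM hS fun x hx => congrFun hfg ⟨x, hx⟩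

theorem Subgroup.exists_characteristic_finiteIndex_le {G : Type*} [Group G] [Group.FG G]
    (H : Subgroup G) [H.Normal] [H.FiniteIndex] :
    ∃ K : Subgroup G, K.Characteristic ∧ K.FiniteIndex ∧ K ≤ H := by
  have := finite_monoidHom_of_fg G (G ⧸ H)
  refine ⟨⨅ f : G →* G ⧸ H, f.ker, characteristic_iff_le_comap.mpr fun α x hx => ?_,
    finiteIndex_iInf fun f => inferInstance,
    iInf_le_of_le (QuotientGroup.mk' H) (QuotientGroup.ker_mk' H).le⟩
  rw [mem_comap, mem_iInf]
  exact fun f => mem_iInf.mp hx (f.comp α.toMonoidHom)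

-- A copy of `Q`, on which `Q` acts by `ψ`-twisted conjugation rather than by left multiplication.
def TwistedConj {Q : Type*} [Group Q] (_ : Q ≃* Q) : Type _ := Q

instance {Q : Type*} [Group Q] (ψ : Q ≃* Q) : MulAction Q (TwistedConj ψ) where
  smul x g := x * (show Q from g) * (ψ x)⁻¹
  one_smul := fun g : Q => by
    show 1 * g * (ψ 1)⁻¹ = g
    simp
  mul_smul := fun x y (g : Q) => by
    show x * y * g * (ψ (x * y))⁻¹ = x * (y * g * (ψ y)⁻¹) * (ψ x)⁻¹
    simp [mul_assoc]

theorem orbitRel_twistedConj {Q : Type*} [Group Q] (ψ : Q ≃* Q) :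
    MulAction.orbitRel Q (TwistedConj ψ) = twistedConjSetoid ψ := by
  refine Setoid.ext fun (g h : Q) => ?_
  show (∃ x : Q, x * h * (ψ x)⁻¹ = g) ↔ ∃ x, h = x * g * (ψ x)⁻¹
  exact (exists_congr fun x => eq_comm).trans (twistedConjSetoid ψ).comm'

theorem card_fixedPoints_le_landauBound {Q : Type*} [Group Q] [Finite Q] (ψ : Q ≃* Q) {r : ℕ}
    (hr : Nat.card (Quotient (twistedConjSetoid ψ)) ≤ r) :
    Nat.card {q : Q // ψ q = q} ≤ landauBound r 1 := by
  let one : TwistedConj ψ := (1 : Q)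
  have hstab : Nat.card {q : Q // ψ q = q} = Nat.card (MulAction.stabilizer Q one) := by
    refine Nat.card_congr (Equiv.subtypeEquivRight fun x => ?_)
    show ψ x = x ↔ x * 1 * (ψ x)⁻¹ = 1
    rw [mul_one, mul_inv_eq_one, eq_comm]
  have hr' : Nat.card (MulAction.orbitRel.Quotient Q (TwistedConj ψ)) ≤ r := by
    rwa [MulAction.orbitRel.Quotient, orbitRel_twistedConj]
  rw [hstab]
  exact MulAction.card_stabilizer_le_landauBound (Q := Q) (X := TwistedConj ψ) rfl hr' one

theorem card_quotient_twistedConjSetoid_le_of_surjective {G Q : Type*} [Group G] [Group Q]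
    {φ : G ≃* G} {ψ : Q ≃* Q} [Finite (Quotient (twistedConjSetoid φ))] {π : G →* Q}
    (hπ : Function.Surjective π) (hπφ : ∀ g, π (φ g) = ψ (π g)) :
    Nat.card (Quotient (twistedConjSetoid ψ)) ≤ Nat.card (Quotient (twistedConjSetoid φ)) := by
  refine Nat.card_le_card_of_surjective (Quotient.map π ?_) ?_
  · rintro g _ ⟨x, rfl⟩
    exact ⟨π x, by simp [hπφ]⟩
  · rintro ⟨q⟩
    obtain ⟨g, rfl⟩ := hπ q
    exact ⟨⟦g⟧, rfl⟩

/-- If `G` is finitely generated residually finite and `Fix(φ)` is infinite,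
then `φ` has infinitely many twisted conjugacy classes. -/
theorem stmt_13 {G : Type*} [Group G] [Group.FG G]
    (hrf : IsResiduallyFinite G) (φ : G ≃* G)
    (hfix : Infinite {g : G // φ g = g}) :
    Infinite (Quotient (twistedConjSetoid φ)) := by
  have := hrf.residuallyFinite
  by_contra hR
  rw [not_infinite_iff_finite] at hR
  set n := Nat.card (Quotient (twistedConjSetoid φ))
  let u : Fin (landauBound n 1 + 1) ↪ {g : G // φ g = g} :=
    Fin.valEmbedding.trans (Infinite.natEmbedding _)
  obtain ⟨N, _, _, hu⟩ := Group.ResiduallyFinite.exists_normal_finiteIndex_injective_mk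
    (Subtype.val_injective.comp u.injective)
  obtain ⟨K, hK, _, hKN⟩ := N.exists_characteristic_finiteIndex_le
  let ψ := QuotientGroup.congr K K φ (Subgroup.characteristic_iff_map_eq.mp hK φ)
  have hψ (g : G) : ψ g = φ g := QuotientGroup.congr_mk ..
  have hR' : Nat.card (Quotient (twistedConjSetoid ψ)) ≤ n :=
    card_quotient_twistedConjSetoid_le_of_surjective (QuotientGroup.mk'_surjective K) hψ
  have hfix' : landauBound n 1 + 1 ≤ Nat.card {q : G ⧸ K // ψ q = q} := by
    have hinj : Function.Injective fun i => ((u i : G) : G ⧸ K) := fun i j hij =>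
      hu (QuotientGroup.eq.mpr (hKN (QuotientGroup.eq.mp hij)))
    simpa using Nat.card_le_card_of_injective
      (fun i => (⟨(u i : G), by rw [hψ, (u i).2]⟩ : {q : G ⧸ K // ψ q = q}))
      fun i j hij => hinj (congrArg Subtype.val hij)
  have := card_fixedPoints_le_landauBound ψ hR'
  omega
end

section
/- Let G be an infinite finitely generated residually finite group and φ an automorphism with R(φ) < ∞. Then every twisted conjugacy class {x·g·φ(x)⁻¹ : x ∈ G} is infinite. -/
namespace Group.ResiduallyFinite

variable {G : Type*} [Group G] [Group.ResiduallyFinite G]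

theorem exists_normal_finiteIndex_forall_mem_eq_one {T : Set G} (hT : T.Finite) :
    ∃ N : Subgroup G, N.Normal ∧ N.FiniteIndex ∧ ∀ t ∈ T, t ∈ N → t = 1 := by
  have := hT.to_subtype
  have hsep (t : T) : ∃ H : FiniteIndexNormalSubgroup G, t.1 ∈ H → t.1 = 1 := by
    by_cases ht : t.1 = 1
    · exact ⟨.ofSubgroup ⊤, fun _ => ht⟩
    · obtain ⟨H, hH⟩ := exists_finiteIndexNormalSubgroup_notMem t.1 ht
      exact ⟨H, fun h => absurd h hH⟩
  choose H hH using hsep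
  refine ⟨⨅ t, (H t).toSubgroup, Subgroup.normal_iInf_normal fun t => inferInstance,
    Subgroup.finiteIndex_iInf fun t => inferInstance, fun t ht htN => hH ⟨t, ht⟩ ?_⟩
  exact Subgroup.mem_iInf.1 htN ⟨t, ht⟩

theorem infinite_conjClasses [Infinite G] : Infinite (ConjClasses G) := by
  by_contra hfin
  rw [not_infinite_iff_finite] at hfin
  let rep := Function.surjInv (@ConjClasses.mk_surjective G _)
  obtain ⟨N, hN, hNfi, hNrep⟩ := exists_normal_finiteIndex_forall_mem_eq_one (Set.finite_range rep)
  obtain ⟨n, hnN, hn⟩ : ∃ n ∈ N, n ≠ 1 := N.bot_or_exists_ne_one.resolve_left fun hbot => by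
    simpa [hbot, Subgroup.index_bot] using hNfi.index_ne_zero
  obtain ⟨t, ht, c, hc⟩ : ∃ t ∈ Set.range rep, ∃ c, c * t * c⁻¹ = n :=
    ⟨_, Set.mem_range_self _, isConj_iff.1 <| ConjClasses.mk_eq_mk_iff_isConj.1 <|
      Function.surjInv_eq ConjClasses.mk_surjective (ConjClasses.mk n)⟩
  have htN : t ∈ N := by
    have : t = c⁻¹ * n * c⁻¹⁻¹ := by rw [← hc]; group
    exact this ▸ hN.conj_mem n hnN c⁻¹
  rw [hNrep t ht htN, mul_one, mul_inv_cancel] at hc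
  exact hn hc.symm

end Group.ResiduallyFinite

section TwistedConjugacy

variable {G : Type*} [Group G] (φ : G ≃* G)

def twistedStabilizer (g : G) : Subgroup G where
  carrier := {x | x * g = g * φ x}
  one_mem' := by simp
  mul_mem' {a b} ha hb := by
    simp only [Set.mem_ofPred_eq, map_mul] at *
    rw [mul_assoc, hb, ← mul_assoc, ha, mul_assoc]
  inv_mem' {a} ha := by
    simp only [Set.mem_ofPred_eq, map_inv] at *
    rw [inv_mul_eq_iff_eq_mul, ← mul_assoc, ha, mul_inv_cancel_right]

variable {φ}

theorem mem_twistedStabilizer {g x : G} : x ∈ twistedStabilizer φ g ↔ x * g = g * φ x :=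
  Iff.rfl

theorem twist_eq_twist_iff {g x y : G} :
    x * g * (φ x)⁻¹ = y * g * (φ y)⁻¹ ↔ x⁻¹ * y ∈ twistedStabilizer φ g := by
  rw [mem_twistedStabilizer, map_mul, map_inv, ← mul_left_cancel_iff (a := x⁻¹),
    ← mul_right_cancel_iff (a := φ y), eq_comm]
  simp only [mul_assoc, inv_mul_cancel_left, inv_mul_cancel, mul_one]

theorem finiteIndex_twistedStabilizer {g : G}
    (hg : ({y : G | ∃ x : G, y = x * g * (φ x)⁻¹} : Set G).Finite) :
    (twistedStabilizer φ g).FiniteIndex := by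
  have := hg.to_subtype
  let orbitMap : G ⧸ twistedStabilizer φ g → {y : G | ∃ x : G, y = x * g * (φ x)⁻¹} :=
    Quotient.lift (fun x => ⟨x * g * (φ x)⁻¹, x, rfl⟩) fun x y hxy =>
      Subtype.ext (twist_eq_twist_iff.2 (QuotientGroup.leftRel_apply.1 hxy))
  have : Finite (G ⧸ twistedStabilizer φ g) := Finite.of_injective orbitMap <| by
    rintro ⟨x⟩ ⟨y⟩ hxy
    exact QuotientGroup.eq.2 (twist_eq_twist_iff.1 (congrArg Subtype.val hxy))
  exact Subgroup.finiteIndex_of_finite_quotient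

theorem isConj_twist_mul_inv_of_mem_twistedStabilizer {g u : G}
    (hu : u ∈ twistedStabilizer φ g) (c a : G) :
    IsConj (c⁻¹ * a * φ c * g⁻¹) ((c * u)⁻¹ * a * (φ (c * u)⁻¹)⁻¹ * g⁻¹) := by
  have hu' : φ u * g⁻¹ = g⁻¹ * u := by
    rw [mem_twistedStabilizer] at hu
    rw [mul_inv_eq_iff_eq_mul, mul_assoc, hu, inv_mul_cancel_left]
  refine isConj_iff.2 ⟨u⁻¹, ?_⟩
  simp only [map_inv, map_mul, inv_inv, mul_inv_rev, mul_assoc, hu']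

theorem finite_conjClasses_of_finiteIndex_twistedStabilizer
    (hR : Finite (Quotient (twistedConjSetoid φ))) (g : G) [(twistedStabilizer φ g).FiniteIndex] :
    Finite (ConjClasses G) := by
  refine Finite.of_surjective
    (fun p : Quotient (twistedConjSetoid φ) × (G ⧸ twistedStabilizer φ g) =>
      ConjClasses.mk (p.2.out⁻¹ * p.1.out * φ p.2.out * g⁻¹)) ?_
  refine ConjClasses.forall_isConj.2 fun z => ?_
  set a := (⟦z * g⟧ : Quotient (twistedConjSetoid φ)).out
  obtain ⟨x, hx⟩ : (twistedConjSetoid φ) a (z * g) := Quotient.exact (Quotient.out_eq _)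
  set c := (QuotientGroup.mk x⁻¹ : G ⧸ twistedStabilizer φ g).out
  obtain ⟨u, hu⟩ : ∃ u : twistedStabilizer φ g, c = x⁻¹ * u := QuotientGroup.mk_out_eq_mul _ _
  refine ⟨(⟦z * g⟧, QuotientGroup.mk x⁻¹), ConjClasses.mk_eq_mk_iff_isConj.2 ?_⟩
  have hc : c * (u : G)⁻¹ = x⁻¹ := by rw [hu, mul_inv_cancel_right]
  have := isConj_twist_mul_inv_of_mem_twistedStabilizer (inv_mem u.2) c a
  rwa [hc, inv_inv, ← hx, mul_inv_cancel_right] at this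

end TwistedConjugacy

theorem stmt_16_general {G : Type*} [Group G] [Infinite G]
    (hrf : IsResiduallyFinite G) (φ : G ≃* G)
    (hR : Finite (Quotient (twistedConjSetoid φ))) (g : G) :
    ({y : G | ∃ x : G, y = x * g * (φ x)⁻¹} : Set G).Infinite := by
  intro hfin
  have := hrf.residuallyFinite
  have := finiteIndex_twistedStabilizer hfin
  exact not_finite_iff_infinite.2 Group.ResiduallyFinite.infinite_conjClasses
    (finite_conjClasses_of_finiteIndex_twistedStabilizer hR g)

/-- If `G` is infinite, finitely generated, residually finite and `R(φ) < ∞`,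
then every twisted conjugacy class of `φ` is infinite. -/
theorem stmt_16 {G : Type*} [Group G] [Group.FG G] [Infinite G]
    (hrf : IsResiduallyFinite G) (φ : G ≃* G)
    (hR : Finite (Quotient (twistedConjSetoid φ))) (g : G) :
    ({y : G | ∃ x : G, y = x * g * (φ x)⁻¹} : Set G).Infinite :=
  stmt_16_general hrf φ hR g
end
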